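/- arXiv:1207.5712 — 5 statements merged into one kernel-verified Lean document; each statement's English description precedes it below -/
import Mathlib

section
/- Let G be the simple graph on vertex set {1,...,7} with edge set E = {{1,2},{1,3},{1,4},{1,5},{1,7},{2,7},{3,5},{3,6},{4,5},{4,6},{4,7},{5,6},{6,7}} (the graph G1065 of the atlas). Then msr(G) = 4; that is, there exists a 7×7 Hermitian positive semidefinite complex matrix with graph G of rank 4, and every 7×7 Hermitian positive semidefinite complex matrix with graph G has rank at least 4. -/
open Matrix ComplexOrder

/-- The edge set of the graph G1065 on vertices 1,...,7. -/
def edgesG1065 : Set (Sym2 ℕ) :=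
  {s(1, 2), s(1, 3), s(1, 4), s(1, 5), s(1, 7), s(2, 7), s(3, 5), s(3, 6), s(4, 5), s(4, 6), s(4, 7), s(5, 6), s(6, 7)}

/-- `M` has graph G1065: for `i ≠ j`, `M i j ≠ 0` iff `{i+1, j+1}` is an edge of G1065. -/
def HasGraphG1065 (M : Matrix (Fin 7) (Fin 7) ℂ) : Prop :=
  ∀ i j : Fin 7, i ≠ j → (M i j ≠ 0 ↔ s((i : ℕ) + 1, (j : ℕ) + 1) ∈ edgesG1065)


/-!
The vertices 2, 7, 4, 5 (rows) and 7, 4, 5, 3 (columns) of G1065 carry a lower triangular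
4 × 4 submatrix whose diagonal consists of the edges {2,7}, {7,4}, {4,5}, {5,3}, so every matrix
with this graph has rank at least 4. Conversely, the Gram matrix of seven suitable integer
vectors in ℤ⁴ is positive semidefinite of rank at most 4 and has exactly the pattern of G1065.
-/

namespace Matrix

variable {m n k R : Type*}

theorem card_le_rank_of_isLowerTriangular_submatrix [Fintype n] [CommRing R] [IsDomain R]
    [Fintype k] [LinearOrder k] (A : Matrix m n R) (r : k → m) (c : k → n)
    (hA : (A.submatrix r c).IsLowerTriangular) (hdiag : ∀ i, A (r i) (c i) ≠ 0) :
    Fintype.card k ≤ A.rank := by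
  classical
  have hdet : (A.submatrix r c).det ≠ 0 := by
    rw [det_of_isLowerTriangular _ hA]
    exact Finset.prod_ne_zero_iff.mpr fun i _ => hdiag i
  exact (rank_of_det_ne_zero hdet).symm.le.trans (rank_submatrix_le A r c)

variable [Fintype m] {𝕜 : Type*} [RCLike 𝕜]

theorem map_intCast_transpose_mul_self (A : Matrix m n ℤ) :
    (Aᵀ * A).map (Int.cast : ℤ → 𝕜) = (A.map (Int.cast : ℤ → 𝕜))ᴴ * A.map (Int.cast : ℤ → 𝕜) := by
  rw [← conjTranspose_map _ (fun _ => by simp), conjTranspose_eq_transpose_of_trivial]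
  exact Matrix.map_mul (f := Int.castRingHom 𝕜)

theorem posSemidef_map_intCast_transpose_mul_self [Fintype n] (A : Matrix m n ℤ) :
    ((Aᵀ * A).map (Int.cast : ℤ → 𝕜)).PosSemidef := by
  rw [map_intCast_transpose_mul_self]
  exact posSemidef_conjTranspose_mul_self _

theorem rank_map_intCast_transpose_mul_self_le [Fintype n] (A : Matrix m n ℤ) :
    ((Aᵀ * A).map (Int.cast : ℤ → 𝕜)).rank ≤ Fintype.card m := by
  rw [map_intCast_transpose_mul_self, rank_conjTranspose_mul_self]
  exact rank_le_card_height _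

end Matrix

instance : DecidablePred (· ∈ edgesG1065) := fun _ => by unfold edgesG1065; infer_instance

theorem HasGraphG1065.apply_eq_zero {M : Matrix (Fin 7) (Fin 7) ℂ} (hM : HasGraphG1065 M)
    {i j : Fin 7} (hij : i ≠ j) (h : s((i : ℕ) + 1, (j : ℕ) + 1) ∉ edgesG1065) : M i j = 0 :=
  not_not.mp <| mt (hM i j hij).mp h

theorem HasGraphG1065.apply_ne_zero {M : Matrix (Fin 7) (Fin 7) ℂ} (hM : HasGraphG1065 M)
    {i j : Fin 7} (hij : i ≠ j) (h : s((i : ℕ) + 1, (j : ℕ) + 1) ∈ edgesG1065) : M i j ≠ 0 :=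
  (hM i j hij).mpr h

theorem HasGraphG1065.four_le_rank {M : Matrix (Fin 7) (Fin 7) ℂ} (hM : HasGraphG1065 M) :
    4 ≤ M.rank := by
  have hA : (M.submatrix ![1, 6, 3, 4] ![6, 3, 4, 2]).IsLowerTriangular := by
    intro i j hij
    fin_cases i <;> fin_cases j <;> first
      | exact absurd hij (by decide)
      | exact hM.apply_eq_zero (by decide) (by decide)
  simpa using Matrix.card_le_rank_of_isLowerTriangular_submatrix M _ _ hA fun i => by
    fin_cases i <;> exact hM.apply_ne_zero (by decide) (by decide)

theorem hasGraphG1065_map_intCast {N : Matrix (Fin 7) (Fin 7) ℤ}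
    (hN : ∀ i j : Fin 7, i ≠ j → (N i j ≠ 0 ↔ s((i : ℕ) + 1, (j : ℕ) + 1) ∈ edgesG1065)) :
    HasGraphG1065 (N.map Int.cast) := by
  intro i j hij
  rw [Matrix.map_apply, ne_eq, Int.cast_eq_zero, ← ne_eq]
  exact hN i j hij

/-- Column `v` is the vector assigned to vertex `v + 1`. -/
def gramFactorG1065 : Matrix (Fin 4) (Fin 7) ℤ :=
  !![ 1, 0, 1, 0, 1, 1, 0;
      1, 0, 0, 1, 1, 1, 0;
     -2, 0, 0, 1, 0, 1, 1;
      1, 1, 0, 0, 0, 0, 1]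

theorem hasGraphG1065_gram :
    HasGraphG1065 ((gramFactorG1065ᵀ * gramFactorG1065).map Int.cast) :=
  hasGraphG1065_map_intCast (by decide)

/-- msr(G1065) = 4. -/
theorem msr_G1065 :
    (∃ M : Matrix (Fin 7) (Fin 7) ℂ, M.PosSemidef ∧ HasGraphG1065 M ∧ M.rank = 4) ∧
    (∀ M : Matrix (Fin 7) (Fin 7) ℂ, M.PosSemidef → HasGraphG1065 M → 4 ≤ M.rank) := by
  refine ⟨⟨_, Matrix.posSemidef_map_intCast_transpose_mul_self gramFactorG1065,
    hasGraphG1065_gram, le_antisymm ?_ hasGraphG1065_gram.four_le_rank⟩,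
    fun _ _ hM => hM.four_le_rank⟩
  simpa using Matrix.rank_map_intCast_transpose_mul_self_le (𝕜 := ℂ) gramFactorG1065
end

section
/- Let G be the simple graph on vertex set {1,...,7} with edge set E = {{1,2},{1,6},{1,7},{2,3},{2,6},{2,7},{3,4},{3,5},{3,6},{4,5},{4,6},{4,7},{5,6}} (the graph G1091 of the atlas). Then msr(G) = 4; that is, there exists a 7×7 Hermitian positive semidefinite complex matrix with graph G of rank 4, and every 7×7 Hermitian positive semidefinite complex matrix with graph G has rank at least 4. -/
/-!
The four vertices 1, 3, 5, 7 induce two disjoint edges {1,7} and {3,5}, so every admissible `M`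
has a block-diagonal principal 4×4 submatrix on them. Each 2×2 block is nonsingular: a singular
2×2 principal block of a PSD matrix makes the two corresponding columns proportional, whereas
vertex 6 (resp. 2) is adjacent to 1 but not 7 (resp. to 3 but not 5). Hence `rank M ≥ 4`.
Equality is attained by the Gram matrix of seven integer vectors in `ℂ⁴`.
-/

open Matrix ComplexOrder

/-- The edge set of the graph G1091 on vertices 1,...,7. -/
def edgesG1091 : Set (Sym2 ℕ) :=
  {s(1, 2), s(1, 6), s(1, 7), s(2, 3), s(2, 6), s(2, 7), s(3, 4), s(3, 5), s(3, 6), s(4, 5), s(4, 6), s(4, 7), s(5, 6)}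

/-- `M` has graph G1091: for `i ≠ j`, `M i j ≠ 0` iff `{i+1, j+1}` is an edge of G1091. -/
def HasGraphG1091 (M : Matrix (Fin 7) (Fin 7) ℂ) : Prop :=
  ∀ i j : Fin 7, i ≠ j → (M i j ≠ 0 ↔ s((i : ℕ) + 1, (j : ℕ) + 1) ∈ edgesG1091)

namespace Matrix

theorem card_le_rank_of_det_submatrix_ne_zero {m n K : Type*} [Fintype m] [DecidableEq m]
    [Fintype n] [Field K] (A : Matrix n n K) (e : m → n) (h : (A.submatrix e e).det ≠ 0) :
    Fintype.card m ≤ A.rank := by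
  rw [← rank_of_isUnit _ ((isUnit_iff_isUnit_det _).2 h.isUnit)]
  exact rank_submatrix_le A e e

theorem conjTranspose_map_intCast_mul_self {m n 𝕜 : Type*} [Fintype m] [RCLike 𝕜]
    (A : Matrix m n ℤ) :
    (A.map (Int.cast : ℤ → 𝕜))ᴴ * A.map (Int.cast : ℤ → 𝕜) =
      (Aᵀ * A).map Int.cast := by
  ext i j
  simp [mul_apply, conjTranspose_apply]

namespace PosSemidef

variable {n 𝕜 : Type*} [Fintype n] [DecidableEq n] [RCLike 𝕜] {M : Matrix n n 𝕜}

theorem apply_eq_zero_of_diag_eq_zero (hM : M.PosSemidef) {j : n} (hjj : M j j = 0) (i : n) :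
    M i j = 0 := by
  have hform : star (Pi.single j 1) ⬝ᵥ M *ᵥ Pi.single j (1 : 𝕜) = 0 := by
    simp [Pi.star_single, mulVec_single, hjj]
  simpa [mulVec_single] using congrFun ((hM.dotProduct_mulVec_zero_iff _).1 hform) i

theorem apply_mul_eq_of_det_eq_zero (hM : M.PosSemidef) {i j : n}
    (hdet : M i i * M j j - M i j * M j i = 0) (k : n) :
    M k i * M j j = M k j * M j i := by
  -- `star u ⬝ᵥ M *ᵥ u = star (M j j) * hdet`, so `M *ᵥ u = 0`, which is the claim.
  set u : n → 𝕜 := Pi.single i (M j j) - Pi.single j (M j i)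
  have hMu : M *ᵥ u = fun k => M k i * M j j - M k j * M j i := by
    ext k
    simp [u, mulVec_sub, mulVec_single]
    ring
  have hform : star u ⬝ᵥ M *ᵥ u = 0 := by
    simp only [u, hMu, star_sub, Pi.star_single, sub_dotProduct, single_dotProduct, hdet]
    ring
  have := congrFun ((hM.dotProduct_mulVec_zero_iff u).1 hform) k
  rw [hMu] at this
  exact sub_eq_zero.1 this

theorem det_two_ne_zero_of_apply_ne_zero (hM : M.PosSemidef) {i j k : n} (hij : M i j ≠ 0)
    (hki : M k i ≠ 0) (hkj : M k j = 0) : M i i * M j j - M i j * M j i ≠ 0 := by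
  intro hdet
  have hjj : M j j = 0 := by
    simpa [hkj, hki] using hM.apply_mul_eq_of_det_eq_zero hdet k
  exact hij (hM.apply_eq_zero_of_diag_eq_zero hjj i)

end PosSemidef

end Matrix

instance : DecidablePred (· ∈ edgesG1091) := fun _ =>
  decidable_of_iff _ (by simp only [edgesG1091, Set.mem_insert_iff, Set.mem_singleton_iff]; rfl)

namespace HasGraphG1091

variable {M : Matrix (Fin 7) (Fin 7) ℂ}

theorem apply_ne_zero (hG : HasGraphG1091 M) {i j : Fin 7} (hij : i ≠ j)
    (h : s((i : ℕ) + 1, (j : ℕ) + 1) ∈ edgesG1091) : M i j ≠ 0 :=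
  (hG i j hij).2 h

theorem apply_eq_zero (hG : HasGraphG1091 M) {i j : Fin 7} (hij : i ≠ j)
    (h : s((i : ℕ) + 1, (j : ℕ) + 1) ∉ edgesG1091) : M i j = 0 :=
  not_not.1 (mt (hG i j hij).1 h)

theorem four_le_rank (hG : HasGraphG1091 M) (hM : M.PosSemidef) : 4 ≤ M.rank := by
  -- indices are vertex labels minus one: these are the vertices 1, 7 and 3, 5
  let e : Fin 2 ⊕ Fin 2 → Fin 7 := Sum.elim ![0, 6] ![2, 4]
  have hoff : (M.submatrix e e).toBlocks₂₁ = 0 := by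
    ext a b
    fin_cases a <;> fin_cases b <;> exact hG.apply_eq_zero (by decide) (by decide)
  have hdet : (M.submatrix e e).det =
      (M 0 0 * M 6 6 - M 0 6 * M 6 0) * (M 2 2 * M 4 4 - M 2 4 * M 4 2) := by
    rw [← fromBlocks_toBlocks (M.submatrix e e), hoff, det_fromBlocks_zero₂₁, det_fin_two,
      det_fin_two]
    rfl
  have hblock₁₇ : M 0 0 * M 6 6 - M 0 6 * M 6 0 ≠ 0 :=
    hM.det_two_ne_zero_of_apply_ne_zero (k := 5) (hG.apply_ne_zero (by decide) (by decide))
      (hG.apply_ne_zero (by decide) (by decide)) (hG.apply_eq_zero (by decide) (by decide))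
  have hblock₃₅ : M 2 2 * M 4 4 - M 2 4 * M 4 2 ≠ 0 :=
    hM.det_two_ne_zero_of_apply_ne_zero (k := 1) (hG.apply_ne_zero (by decide) (by decide))
      (hG.apply_ne_zero (by decide) (by decide)) (hG.apply_eq_zero (by decide) (by decide))
  simpa [e] using
    M.card_le_rank_of_det_submatrix_ne_zero e (hdet ▸ mul_ne_zero hblock₁₇ hblock₃₅)

end HasGraphG1091

def gramFactorG1091 : Matrix (Fin 4) (Fin 7) ℤ :=
  !![1, 1, 0, 0, 0, 1, 1;
     0, 1, 0, 1, 0, -1, 1;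
     0, 1, 1, 1, 1, 1, 0;
     0, -1, 0, 2, 1, 2, 0]

theorem hasGraphG1091_gram :
    HasGraphG1091 ((gramFactorG1091.map (Int.cast : ℤ → ℂ))ᴴ *
      gramFactorG1091.map (Int.cast : ℤ → ℂ)) := by
  simp only [HasGraphG1091, conjTranspose_map_intCast_mul_self, map_apply, ne_eq,
    Int.cast_eq_zero]
  decide

/-- msr(G1091) = 4. -/
theorem msr_G1091 :
    (∃ M : Matrix (Fin 7) (Fin 7) ℂ, M.PosSemidef ∧ HasGraphG1091 M ∧ M.rank = 4) ∧
    (∀ M : Matrix (Fin 7) (Fin 7) ℂ, M.PosSemidef → HasGraphG1091 M → 4 ≤ M.rank) := by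
  refine ⟨?_, fun M hM hG => hG.four_le_rank hM⟩
  have hM := posSemidef_conjTranspose_mul_self (gramFactorG1091.map (Int.cast : ℤ → ℂ))
  refine ⟨_, hM, hasGraphG1091_gram, le_antisymm ?_ (hasGraphG1091_gram.four_le_rank hM)⟩
  rw [rank_conjTranspose_mul_self]
  exact (rank_le_card_height _).trans_eq (Fintype.card_fin 4)
end

section
/- Let G be the simple graph on vertex set {1,...,7} with edge set E = {{1,2},{1,5},{1,6},{2,3},{2,5},{2,6},{2,7},{3,4},{3,5},{3,7},{4,5},{4,7},{5,6},{6,7}} (the graph G1154 of the atlas). Then msr(G) = 4; that is, there exists a 7×7 Hermitian positive semidefinite complex matrix with graph G of rank 4, and every 7×7 Hermitian positive semidefinite complex matrix with graph G has rank at least 4. -/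
open Matrix ComplexOrder

/-- The edge set of the graph G1154 on vertices 1,...,7. -/
def edgesG1154 : Set (Sym2 ℕ) :=
  {s(1, 2), s(1, 5), s(1, 6), s(2, 3), s(2, 5), s(2, 6), s(2, 7), s(3, 4), s(3, 5), s(3, 7), s(4, 5), s(4, 7), s(5, 6), s(6, 7)}

/-- `M` has graph G1154: for `i ≠ j`, `M i j ≠ 0` iff `{i+1, j+1}` is an edge of G1154. -/
def HasGraphG1154 (M : Matrix (Fin 7) (Fin 7) ℂ) : Prop :=
  ∀ i j : Fin 7, i ≠ j → (M i j ≠ 0 ↔ s((i : ℕ) + 1, (j : ℕ) + 1) ∈ edgesG1154)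

/-!
The rank-4 example is the Gram matrix of seven integer vectors in `ℂ⁴`. For the lower bound,
in any matrix with graph G1154 the rows of the vertices 2, 7, 3, 4 and the columns of the
vertices 1, 6, 2, 3 form a 4 × 4 submatrix that is upper triangular (its entries below the
diagonal sit on non-edges) with nonzero diagonal (sitting on edges), so it is nonsingular.
-/

namespace Matrix

theorem card_le_rank_of_isUpperTriangular_submatrix {m n K : Type*} [Fintype n] [Field K]
    {k : ℕ} (A : Matrix m n K) (r : Fin k → m) (c : Fin k → n)
    (hA : (A.submatrix r c).IsUpperTriangular) (hd : ∀ i, A (r i) (c i) ≠ 0) : k ≤ A.rank := by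
  have hdet : (A.submatrix r c).det ≠ 0 := by
    rw [det_of_isUpperTriangular hA]
    exact Finset.prod_ne_zero_iff.mpr fun i _ => hd i
  calc k = (A.submatrix r c).rank := by
        rw [rank_of_isUnit _ ((isUnit_iff_isUnit_det _).mpr hdet.isUnit), Fintype.card_fin]
    _ ≤ A.rank := rank_submatrix_le A r c

theorem map_intCast_mul_transpose {m n R : Type*} [Fintype n] [Ring R] [StarRing R]
    (A : Matrix m n ℤ) :
    (A * Aᵀ).map (Int.cast : ℤ → R) = A.map Int.cast * (A.map (Int.cast : ℤ → R))ᴴ := by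
  rw [← conjTranspose_map _ fun z => (star_intCast z).symm, conjTranspose_eq_transpose_of_trivial]
  exact Matrix.map_mul (f := Int.castRingHom R)

end Matrix

instance decidableMemEdgesG1154 : DecidablePred (· ∈ edgesG1154) := fun _ => by
  unfold edgesG1154
  infer_instance

namespace HasGraphG1154

variable {M : Matrix (Fin 7) (Fin 7) ℂ}

theorem apply_eq_zero (hM : HasGraphG1154 M) {i j : Fin 7} (hij : i ≠ j)
    (he : s((i : ℕ) + 1, (j : ℕ) + 1) ∉ edgesG1154) : M i j = 0 :=
  not_not.mp fun h => he ((hM i j hij).mp h)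

theorem apply_ne_zero (hM : HasGraphG1154 M) {i j : Fin 7} (hij : i ≠ j)
    (he : s((i : ℕ) + 1, (j : ℕ) + 1) ∈ edgesG1154) : M i j ≠ 0 :=
  (hM i j hij).mpr he

theorem four_le_rank (hM : HasGraphG1154 M) : 4 ≤ M.rank := by
  let r : Fin 4 → Fin 7 := ![1, 6, 2, 3]
  let c : Fin 4 → Fin 7 := ![0, 5, 1, 2]
  have hbelow : ∀ i j, j < i → r i ≠ c j ∧ s((r i : ℕ) + 1, (c j : ℕ) + 1) ∉ edgesG1154 := by
    decide
  have hdiag : ∀ i, r i ≠ c i ∧ s((r i : ℕ) + 1, (c i : ℕ) + 1) ∈ edgesG1154 := by decide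
  refine M.card_le_rank_of_isUpperTriangular_submatrix r c (fun i j hji => ?_) fun i => ?_
  · exact hM.apply_eq_zero (hbelow i j hji).1 (hbelow i j hji).2
  · exact hM.apply_ne_zero (hdiag i).1 (hdiag i).2

end HasGraphG1154

theorem hasGraphG1154_map_intCast_iff (A : Matrix (Fin 7) (Fin 7) ℤ) :
    HasGraphG1154 (A.map Int.cast) ↔
      ∀ i j : Fin 7, i ≠ j → (A i j ≠ 0 ↔ s((i : ℕ) + 1, (j : ℕ) + 1) ∈ edgesG1154) := by
  simp only [HasGraphG1154, map_apply, ne_eq, Int.cast_eq_zero]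

def gramFactorG1154 : Matrix (Fin 7) (Fin 4) ℤ :=
  !![1, 0, 0, 0; 1, 1, -1, 1; 0, 1, 0, 0; 0, 1, 1, 0; 1, 2, 1, -3; 1, 0, 0, 1; 0, 1, 1, 1]

def witnessG1154 : Matrix (Fin 7) (Fin 7) ℂ :=
  gramFactorG1154.map Int.cast * (gramFactorG1154.map Int.cast)ᴴ

theorem witnessG1154_posSemidef : witnessG1154.PosSemidef :=
  posSemidef_self_mul_conjTranspose _

theorem hasGraphG1154_witnessG1154 : HasGraphG1154 witnessG1154 := by
  rw [witnessG1154, ← map_intCast_mul_transpose, hasGraphG1154_map_intCast_iff]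
  decide

theorem witnessG1154_rank : witnessG1154.rank = 4 :=
  le_antisymm ((rank_mul_le_left _ _).trans (rank_le_width _))
    hasGraphG1154_witnessG1154.four_le_rank

/-- msr(G1154) = 4. -/
theorem msr_G1154 :
    (∃ M : Matrix (Fin 7) (Fin 7) ℂ, M.PosSemidef ∧ HasGraphG1154 M ∧ M.rank = 4) ∧
    (∀ M : Matrix (Fin 7) (Fin 7) ℂ, M.PosSemidef → HasGraphG1154 M → 4 ≤ M.rank) :=
  ⟨⟨witnessG1154, witnessG1154_posSemidef, hasGraphG1154_witnessG1154, witnessG1154_rank⟩,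
    fun _ _ hM => hM.four_le_rank⟩
end

section
/- Let G be the simple graph on vertex set {1,...,7} with edge set E = {{1,2},{1,4},{1,5},{1,6},{1,7},{2,3},{2,4},{2,5},{2,6},{2,7},{3,4},{3,5},{3,6},{3,7},{4,5},{6,7}} (the graph G1230 of the atlas). Then msr(G) = 2; that is, there exists a 7×7 Hermitian positive semidefinite complex matrix with graph G of rank 2, and every 7×7 Hermitian positive semidefinite complex matrix with graph G has rank at least 2. -/
/-!
The rows `(1,1), (1,2), (1,-1), (1,0), (1,0), (0,1), (0,1)` of a `7 × 2` integer matrix `B` are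
pairwise orthogonal exactly at the non-edges `{1,3}, {4,6}, {4,7}, {5,6}, {5,7}` of G1230, so the
Gram matrix `B Bᴴ` realizes G1230 with rank at most 2. Conversely, in a positive semidefinite
matrix a vanishing diagonal entry kills its whole column, so the non-adjacent, non-isolated
vertices 1 and 3 give a nonsingular diagonal `2 × 2` principal submatrix, forcing rank at least 2.
-/

open Matrix ComplexOrder

/-- The edge set of the graph G1230 on vertices 1,...,7. -/
def edgesG1230 : Set (Sym2 ℕ) :=
  {s(1, 2), s(1, 4), s(1, 5), s(1, 6), s(1, 7), s(2, 3), s(2, 4), s(2, 5), s(2, 6), s(2, 7), s(3, 4), s(3, 5), s(3, 6), s(3, 7), s(4, 5), s(6, 7)}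

/-- `M` has graph G1230: for `i ≠ j`, `M i j ≠ 0` iff `{i+1, j+1}` is an edge of G1230. -/
def HasGraphG1230 (M : Matrix (Fin 7) (Fin 7) ℂ) : Prop :=
  ∀ i j : Fin 7, i ≠ j → (M i j ≠ 0 ↔ s((i : ℕ) + 1, (j : ℕ) + 1) ∈ edgesG1230)

namespace Matrix

variable {n 𝕜 : Type*} [Fintype n]

lemma PosSemidef.apply_eq_zero_of_diag_eq_zero_s18 [DecidableEq n] [RCLike 𝕜] {A : Matrix n n 𝕜}
    (hA : A.PosSemidef) {i : n} (hi : A i i = 0) (j : n) : A j i = 0 := by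
  have hcol : A *ᵥ Pi.single i 1 = 0 := (hA.dotProduct_mulVec_zero_iff _).1 (by simp [hi])
  simpa using congrFun hcol j

lemma two_le_rank_of_diag_ne_zero [Field 𝕜] {A : Matrix n n 𝕜} {i k : n}
    (hi : A i i ≠ 0) (hk : A k k ≠ 0) (hik : A i k = 0) (hki : A k i = 0) : 2 ≤ A.rank := by
  have hsub : A.submatrix ![i, k] ![i, k] = diagonal ![A i i, A k k] := by
    ext a b
    fin_cases a <;> fin_cases b <;> simp [hik, hki]
  have hunit : IsUnit (A.submatrix ![i, k] ![i, k]) := by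
    simp [hsub, isUnit_diagonal, Pi.isUnit_iff, Fin.forall_fin_two, hi, hk]
  calc 2 = (A.submatrix ![i, k] ![i, k]).rank := by rw [rank_of_isUnit _ hunit, Fintype.card_fin]
    _ ≤ A.rank := rank_submatrix_le _ _ _

lemma PosSemidef.two_le_rank_of_apply_eq_zero [DecidableEq n] [RCLike 𝕜] {A : Matrix n n 𝕜}
    (hA : A.PosSemidef) {i j k l : n} (hji : A j i ≠ 0) (hlk : A l k ≠ 0) (hik : A i k = 0) :
    2 ≤ A.rank := by
  have hki : A k i = 0 := by rw [← hA.isHermitian.apply k i, hik, star_zero]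
  exact two_le_rank_of_diag_ne_zero (mt (hA.apply_eq_zero_of_diag_eq_zero_s18 · j) hji)
    (mt (hA.apply_eq_zero_of_diag_eq_zero_s18 · l) hlk) hik hki

lemma map_intCast_mul_conjTranspose {m k R : Type*} [Fintype k] [Ring R] [StarRing R]
    (B : Matrix m k ℤ) : B.map (Int.cast : ℤ → R) * (B.map Int.cast)ᴴ = (B * Bᵀ).map Int.cast := by
  rw [← conjTranspose_map _ fun z => (star_intCast z).symm, conjTranspose_eq_transpose_of_trivial]
  exact (Matrix.map_mul (f := Int.castRingHom R)).symm

end Matrix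

def factorG1230 : Matrix (Fin 7) (Fin 2) ℤ := !![1, 1; 1, 2; 1, -1; 1, 0; 1, 0; 0, 1; 0, 1]

lemma factorG1230_mul_transpose_ne_zero_iff (i j : Fin 7) (hij : i ≠ j) :
    (factorG1230 * factorG1230ᵀ) i j ≠ 0 ↔ s((i : ℕ) + 1, (j : ℕ) + 1) ∈ edgesG1230 := by
  revert i j
  unfold edgesG1230
  decide

lemma hasGraphG1230_factor_mul_conjTranspose :
    HasGraphG1230 (factorG1230.map (Int.cast : ℤ → ℂ) * (factorG1230.map Int.cast)ᴴ) := by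
  intro i j hij
  rw [map_intCast_mul_conjTranspose, map_apply, Int.cast_ne_zero]
  exact factorG1230_mul_transpose_ne_zero_iff i j hij

lemma two_le_rank_of_hasGraphG1230 {M : Matrix (Fin 7) (Fin 7) ℂ} (hM : M.PosSemidef)
    (hG : HasGraphG1230 M) : 2 ≤ M.rank := by
  have h10 : M 1 0 ≠ 0 := (hG 1 0 (by decide)).2 (by unfold edgesG1230; decide)
  have h32 : M 3 2 ≠ 0 := (hG 3 2 (by decide)).2 (by unfold edgesG1230; decide)
  have h02 : M 0 2 = 0 := not_not.1 <| mt (hG 0 2 (by decide)).1 (by unfold edgesG1230; decide)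
  exact hM.two_le_rank_of_apply_eq_zero h10 h32 h02

/-- msr(G1230) = 2. -/
theorem msr_G1230 :
    (∃ M : Matrix (Fin 7) (Fin 7) ℂ, M.PosSemidef ∧ HasGraphG1230 M ∧ M.rank = 2) ∧
    (∀ M : Matrix (Fin 7) (Fin 7) ℂ, M.PosSemidef → HasGraphG1230 M → 2 ≤ M.rank) := by
  refine ⟨?_, fun M hM hG => two_le_rank_of_hasGraphG1230 hM hG⟩
  set A := factorG1230.map (Int.cast : ℤ → ℂ)
  have hPSD : (A * Aᴴ).PosSemidef := posSemidef_self_mul_conjTranspose A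
  have hG : HasGraphG1230 (A * Aᴴ) := hasGraphG1230_factor_mul_conjTranspose
  refine ⟨A * Aᴴ, hPSD, hG, le_antisymm ?_ (two_le_rank_of_hasGraphG1230 hPSD hG)⟩
  calc (A * Aᴴ).rank ≤ A.rank := rank_mul_le_left _ _
    _ ≤ 2 := rank_le_card_width _
end

section
/- Let G be the simple graph on vertex set {1,...,7} with edge set E = {{1,2},{1,4},{1,5},{1,7},{2,3},{2,4},{2,5},{2,6},{3,4},{3,5},{3,6},{3,7},{4,5},{4,6},{5,6},{5,7},{6,7}} (the graph G1242 of the atlas). Then msr(G) = 2; that is, there exists a 7×7 Hermitian positive semidefinite complex matrix with graph G of rank 2, and every 7×7 Hermitian positive semidefinite complex matrix with graph G has rank at least 2. -/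
open Matrix ComplexOrder

/-- The edge set of the graph G1242 on vertices 1,...,7. -/
def edgesG1242 : Set (Sym2 ℕ) :=
  {s(1, 2), s(1, 4), s(1, 5), s(1, 7), s(2, 3), s(2, 4), s(2, 5), s(2, 6), s(3, 4), s(3, 5), s(3, 6), s(3, 7), s(4, 5), s(4, 6), s(5, 6), s(5, 7), s(6, 7)}

/-- `M` has graph G1242: for `i ≠ j`, `M i j ≠ 0` iff `{i+1, j+1}` is an edge of G1242. -/
def HasGraphG1242 (M : Matrix (Fin 7) (Fin 7) ℂ) : Prop :=
  ∀ i j : Fin 7, i ≠ j → (M i j ≠ 0 ↔ s((i : ℕ) + 1, (j : ℕ) + 1) ∈ edgesG1242)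

/-!
The Gram matrix of seven vectors of `ℤ²` that are orthogonal exactly along the four non-edges
has graph G1242 and rank at most 2. Conversely, vertices 1 and 3 are non-adjacent but not isolated.
In a positive semidefinite matrix a zero diagonal entry kills its whole column, so
`M₁₁, M₃₃ ≠ 0` while `M₁₃ = M₃₁ = 0`: the principal 2 × 2 minor on `{1, 3}` is invertible.
-/

theorem Matrix.PosSemidef.apply_eq_zero_of_diag_eq_zero_s19 {n 𝕜 : Type*} [Fintype n] [RCLike 𝕜]
    {A : Matrix n n 𝕜} (hA : A.PosSemidef) {i : n} (hi : A i i = 0) (j : n) : A j i = 0 := by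
  classical
  have hcol : A *ᵥ Pi.single i 1 = 0 :=
    (hA.dotProduct_mulVec_zero_iff _).mp (by simpa [mulVec_single_one] using hi)
  simpa [mulVec_single_one] using congrFun hcol j

theorem Matrix.two_le_rank_of_diagonal_minor {n K : Type*} [Fintype n] [Field K] (A : Matrix n n K)
    {i j : n} (hij : A i j = 0) (hji : A j i = 0) (hi : A i i ≠ 0) (hj : A j j ≠ 0) :
    2 ≤ A.rank := by
  have hdet : (A.submatrix ![i, j] ![i, j]).det ≠ 0 := by
    rw [det_fin_two]
    simpa [hij, hji] using mul_ne_zero hi hj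
  calc 2 = (A.submatrix ![i, j] ![i, j]).rank := by
        rw [rank_of_isUnit _ ((isUnit_iff_isUnit_det _).mpr hdet.isUnit), Fintype.card_fin]
    _ ≤ A.rank := rank_submatrix_le _ _ _

theorem Matrix.conjTranspose_map_intCast_mul_self_s19 {m n R : Type*} [Fintype m] [Ring R]
    [StarRing R] (B : Matrix m n ℤ) :
    (B.map (Int.castRingHom R))ᴴ * B.map (Int.castRingHom R) =
      (Bᵀ * B).map (Int.castRingHom R) := by
  ext i j
  simp [mul_apply]

theorem two_le_rank_of_hasGraphG1242 {M : Matrix (Fin 7) (Fin 7) ℂ} (hM : M.PosSemidef)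
    (hG : HasGraphG1242 M) : 2 ≤ M.rank := by
  simp only [HasGraphG1242, edgesG1242, Set.mem_insert_iff, Set.mem_singleton_iff] at hG
  have h10 : M 1 0 ≠ 0 := (hG 1 0 (by decide)).mpr (by decide)
  have h32 : M 3 2 ≠ 0 := (hG 3 2 (by decide)).mpr (by decide)
  have h02 : M 0 2 = 0 := not_not.mp (mt (hG 0 2 (by decide)).mp (by decide))
  have h20 : M 2 0 = 0 := not_not.mp (mt (hG 2 0 (by decide)).mp (by decide))
  exact M.two_le_rank_of_diagonal_minor h02 h20
    (mt (hM.apply_eq_zero_of_diag_eq_zero_s19 · 1) h10)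
    (mt (hM.apply_eq_zero_of_diag_eq_zero_s19 · 3) h32)

/-- Column `j` is the vector of `ℤ²` assigned to vertex `j + 1`; the orthogonal pairs are exactly
the non-edges `{1,3}, {1,6}, {2,7}, {4,7}`. -/
def realizingVecsG1242 : Matrix (Fin 2) (Fin 7) ℤ := !![1, 1, 0, 2, 2, 0, 1; 0, 1, 1, 2, 1, 2, -1]

theorem gram_realizingVecsG1242_ne_zero_iff :
    ∀ i j : Fin 7, i ≠ j → ((realizingVecsG1242ᵀ * realizingVecsG1242) i j ≠ 0 ↔
      s((i : ℕ) + 1, (j : ℕ) + 1) ∈ edgesG1242) := by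
  simp only [edgesG1242, Set.mem_insert_iff, Set.mem_singleton_iff]
  decide

/-- msr(G1242) = 2. -/
theorem msr_G1242 :
    (∃ M : Matrix (Fin 7) (Fin 7) ℂ, M.PosSemidef ∧ HasGraphG1242 M ∧ M.rank = 2) ∧
    (∀ M : Matrix (Fin 7) (Fin 7) ℂ, M.PosSemidef → HasGraphG1242 M → 2 ≤ M.rank) := by
  let B := realizingVecsG1242.map (Int.castRingHom ℂ)
  have hPSD : (Bᴴ * B).PosSemidef := posSemidef_conjTranspose_mul_self B
  have hG : HasGraphG1242 (Bᴴ * B) := fun i j hij => by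
    rw [conjTranspose_map_intCast_mul_self_s19, map_apply, eq_intCast, Int.cast_ne_zero]
    exact gram_realizingVecsG1242_ne_zero_iff i j hij
  have hrank : (Bᴴ * B).rank ≤ 2 := by
    calc (Bᴴ * B).rank = B.rank := rank_conjTranspose_mul_self B
      _ ≤ Fintype.card (Fin 2) := rank_le_card_height B
      _ = 2 := Fintype.card_fin 2
  exact ⟨⟨Bᴴ * B, hPSD, hG, hrank.antisymm (two_le_rank_of_hasGraphG1242 hPSD hG)⟩,
    fun _ => two_le_rank_of_hasGraphG1242⟩
end
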